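/- For any n agents with additive valuations, there exists a consensus allocation with at most n(n−1) sharings. -/

import Mathlib

open Finset

/-- `z` is a feasible fractional allocation of `m` objects among `n` agents. -/
def isAlloc {n m : ℕ} (z : Fin n → Fin m → ℝ) : Prop :=
  (∀ i o, 0 ≤ z i o) ∧ ∀ o, ∑ i, z i o = 1

/-- The number of sharings of allocation `z`: `Σ_o (|{i : z i o > 0}| − 1)`. -/
noncomputable def sharings {n m : ℕ} (z : Fin n → Fin m → ℝ) : ℕ :=
  ∑ o, ((univ.filter fun i => 0 < z i o).card - 1)

/-!
Consensus allocations are the nonnegative solutions `z` of a linear system in the `n m` entries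
`z i o`: `m` equations for the objects and `n (n - 1)` consensus equations, those for one bundle
being implied by the others. While a nonnegative solution has more positive entries than there are
equations, some nonzero kernel vector is supported on them, and moving along it until an entry
vanishes gives a solution with smaller support. Starting from the equal split, this yields a
consensus allocation with at most `m + n (n - 1)` positive entries; as every object is held by
somebody, that is at most `n (n - 1)` sharings.
-/

open Module

section NonnegSolution

variable {ι W : Type*} [Fintype ι] [AddCommGroup W] [Module ℝ W] [FiniteDimensional ℝ W]

noncomputable def posSupport (x : ι → ℝ) : Finset ι := {i | 0 < x i}

@[simp]
theorem mem_posSupport {x : ι → ℝ} {i : ι} : i ∈ posSupport x ↔ 0 < x i := by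
  simp [posSupport]

theorem LinearMap.exists_ne_zero_map_eq_zero_of_finrank_lt_card (L : (ι → ℝ) →ₗ[ℝ] W)
    (s : Finset ι) (hs : finrank ℝ W < #s) :
    ∃ d ≠ 0, L d = 0 ∧ ∀ i ∉ s, d i = 0 := by
  classical
  let R : (ι → ℝ) →ₗ[ℝ] ({i // i ∉ s} → ℝ) := LinearMap.funLeft ℝ ℝ Subtype.val
  have hrank : finrank ℝ (W × ({i // i ∉ s} → ℝ)) < finrank ℝ (ι → ℝ) := by
    have : #s ≤ Fintype.card ι := card_le_univ s
    simp only [finrank_prod, finrank_fintype_fun_eq_card, Fintype.card_subtype_compl,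
      Fintype.card_coe]
    omega
  obtain ⟨d, hd, hd0⟩ := Submodule.exists_mem_ne_zero_of_ne_bot
    (LinearMap.ker_ne_bot_of_finrank_lt (f := L.prod R) hrank)
  rw [LinearMap.mem_ker, LinearMap.prod_apply, Prod.mk_eq_zero] at hd
  exact ⟨d, hd0, hd.1, fun i hi => congr_fun hd.2 ⟨i, hi⟩⟩

/-- The ratio test of the simplex method. -/
theorem exists_nonneg_add_smul_posSupport_ssubset {x d : ι → ℝ} (hx : 0 ≤ x)
    (hd : ∀ i, x i = 0 → d i = 0) (hneg : ∃ i, d i < 0) :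
    ∃ t : ℝ, 0 ≤ x + t • d ∧ posSupport (x + t • d) ⊂ posSupport x := by
  obtain ⟨i₀, hi₀, hmin⟩ := exists_min_image {i | d i < 0} (fun i => x i / -d i)
    (by simpa [Finset.Nonempty] using hneg)
  simp only [mem_filter, mem_univ, true_and] at hi₀ hmin
  set t := x i₀ / -d i₀
  have hxi₀ : 0 < x i₀ := (hx i₀).lt_of_ne' fun h => hi₀.ne (hd i₀ h)
  have hnonneg : ∀ i, 0 ≤ x i + t * d i := by
    intro i
    rcases le_or_gt 0 (d i) with hdi | hdi
    · have ht : 0 ≤ t := div_nonneg hxi₀.le (neg_nonneg.2 hi₀.le)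
      exact add_nonneg (hx i) (mul_nonneg ht hdi)
    · have := hmin i hdi
      rw [le_div_iff₀ (neg_pos.2 hdi)] at this
      linarith
  have hzero : x i₀ + t * d i₀ = 0 := by
    simp only [t]
    field_simp [hi₀.ne]
    ring
  refine ⟨t, fun i => hnonneg i, (ssubset_iff_of_subset ?_).2 ⟨i₀, ?_, ?_⟩⟩
  · intro i
    simp only [mem_posSupport, Pi.add_apply, Pi.smul_apply, smul_eq_mul]
    intro hi
    refine (hx i).lt_of_ne' fun h => ?_
    simp [h, hd i h] at hi
  · simpa using hxi₀
  · simp [hzero]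

variable (L : (ι → ℝ) →ₗ[ℝ] W)

theorem LinearMap.exists_nonneg_map_eq_posSupport_ssubset {x : ι → ℝ} (hx : 0 ≤ x)
    (hs : finrank ℝ W < #(posSupport x)) :
    ∃ y, 0 ≤ y ∧ L y = L x ∧ posSupport y ⊂ posSupport x := by
  obtain ⟨d, hd0, hLd, hds⟩ := L.exists_ne_zero_map_eq_zero_of_finrank_lt_card _ hs
  have hdx : ∀ i, x i = 0 → d i = 0 := fun i hi => hds i (by simp [hi])
  obtain ⟨i, hi⟩ := Function.ne_iff.1 hd0
  obtain ⟨e, hLe, hex, hneg⟩ : ∃ e, L e = 0 ∧ (∀ i, x i = 0 → e i = 0) ∧ ∃ i, e i < 0 := by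
    rcases hi.lt_or_gt with hlt | hgt
    · exact ⟨d, hLd, hdx, i, hlt⟩
    · exact ⟨-d, by simp [hLd], fun j hj => by simp [hdx j hj], i, by simpa using hgt⟩
  obtain ⟨t, ht, hsub⟩ := exists_nonneg_add_smul_posSupport_ssubset hx hex hneg
  exact ⟨x + t • e, ht, by simp [hLe], hsub⟩

theorem LinearMap.exists_nonneg_map_eq_card_posSupport_le {x : ι → ℝ} (hx : 0 ≤ x) :
    ∃ y, 0 ≤ y ∧ L y = L x ∧ #(posSupport y) ≤ finrank ℝ W := by
  induction h : #(posSupport x) using Nat.strong_induction_on generalizing x with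
  | _ k ih =>
    by_cases hk : k ≤ finrank ℝ W
    · exact ⟨x, hx, rfl, h ▸ hk⟩
    obtain ⟨y, hy, hLy, hsub⟩ := L.exists_nonneg_map_eq_posSupport_ssubset hx (by omega)
    obtain ⟨y', hy', hLy', hcard⟩ := ih _ (h ▸ card_lt_card hsub) hy rfl
    exact ⟨y', hy', hLy'.trans hLy, hcard⟩

end NonnegSolution

section Consensus

variable {n m : ℕ}

/-- Object-sum constraints and the consensus constraints for the bundles `j ≠ j₀`. Those for `j₀`
follow from them (`consensus_of_forall_ne`); dropping them brings the count of equations down to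
`m + n (n - 1)`. -/
noncomputable def consensusConstraints (v : Fin n → Fin m → ℝ) (j₀ : Fin n) :
    (Fin n × Fin m → ℝ) →ₗ[ℝ] Fin m ⊕ Fin n × {j // j ≠ j₀} → ℝ :=
  LinearMap.pi <| Sum.elim (fun o => ∑ i, LinearMap.proj (i, o))
    fun p => ∑ o, v p.1 o • LinearMap.proj (p.2.1, o)

@[simp]
theorem consensusConstraints_inl (v : Fin n → Fin m → ℝ) (j₀ : Fin n) (x : Fin n × Fin m → ℝ)
    (o : Fin m) : consensusConstraints v j₀ x (.inl o) = ∑ i, x (i, o) := by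
  simp [consensusConstraints]

@[simp]
theorem consensusConstraints_inr (v : Fin n → Fin m → ℝ) (j₀ : Fin n) (x : Fin n × Fin m → ℝ)
    (i : Fin n) (j : {j // j ≠ j₀}) :
    consensusConstraints v j₀ x (.inr (i, j)) = ∑ o, v i o * x (j.1, o) := by
  simp [consensusConstraints]

theorem finrank_consensusConstraints_codomain (j₀ : Fin n) :
    finrank ℝ (Fin m ⊕ Fin n × {j // j ≠ j₀} → ℝ) = m + n * (n - 1) := by
  simp [Fintype.card_subtype_compl]

theorem consensus_of_forall_ne {v z : Fin n → Fin m → ℝ} {j₀ : Fin n}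
    (hz : ∀ o, ∑ i, z i o = 1) (hcons : ∀ i, ∀ j ≠ j₀, ∑ o, v i o * z j o = (∑ o, v i o) / n)
    (i j : Fin n) : ∑ o, v i o * z j o = (∑ o, v i o) / n := by
  classical
  rcases ne_or_eq j j₀ with hj | rfl
  · exact hcons i j hj
  have htotal : ∑ j', ∑ o, v i o * z j' o = ∑ o, v i o := by
    rw [sum_comm]
    simp [← mul_sum, hz]
  have hn : (n : ℝ) ≠ 0 := by have := j.pos; positivity
  rw [← add_sum_erase _ _ (mem_univ j),
    sum_congr rfl fun j' hj' => hcons i j' (ne_of_mem_erase hj'), sum_const,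
    card_erase_of_mem (mem_univ j), card_univ, Fintype.card_fin, nsmul_eq_mul,
    Nat.cast_sub j.pos] at htotal
  push_cast at htotal
  field_simp at htotal ⊢
  linarith

theorem sharings_add_eq_card {z : Fin n → Fin m → ℝ} (hz : isAlloc z) :
    sharings z + m = #(posSupport (Function.uncurry z)) := by
  have hheld : ∀ o, 1 ≤ #{i | 0 < z i o} := fun o => by
    by_contra! h
    have : ∑ i, z i o ≤ 0 := sum_nonpos fun i _ => by
      simpa using filter_eq_empty_iff.1 (card_eq_zero.1 (Nat.lt_one_iff.1 h)) (mem_univ i)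
    linarith [hz.2 o]
  have hsupp : posSupport (Function.uncurry z) =
      ({p | 0 < z p.1 p.2} : Finset (Fin n × Fin m)) := by
    ext; simp [Function.uncurry]
  rw [hsupp, card_filter, Fintype.sum_prod_type, sum_comm, sharings]
  simp only [← card_filter]
  rw [← sum_congr rfl fun o _ => Nat.sub_add_cancel (hheld o), sum_add_distrib]
  simp

end Consensus

/-- There exists a consensus allocation (every agent values every bundle at exactly
`Vᵢ / n`) with at most `n(n − 1)` sharings. -/
theorem exists_consensus_few_sharings {n m : ℕ} (hn : 0 < n)
    (v : Fin n → Fin m → ℝ) :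
    ∃ z : Fin n → Fin m → ℝ, isAlloc z ∧ sharings z ≤ n * (n - 1) ∧
      ∀ i j, ∑ o, v i o * z j o = (∑ o, v i o) / n := by
  let L := consensusConstraints v ⟨0, hn⟩
  have hn' : (n : ℝ) ≠ 0 := by positivity
  obtain ⟨x, hx, hLx, hcard⟩ :=
    L.exists_nonneg_map_eq_card_posSupport_le (x := fun _ => (n : ℝ)⁻¹) fun _ => by positivity
  have hsum (o : Fin m) : ∑ i, x (i, o) = 1 := by
    simpa [L, hn'] using congr_fun hLx (.inl o)
  have hcons (i j : Fin n) (hj : j ≠ ⟨0, hn⟩) : ∑ o, v i o * x (j, o) = (∑ o, v i o) / n := by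
    simpa [L, ← sum_mul, div_eq_mul_inv] using congr_fun hLx (.inr (i, ⟨j, hj⟩))
  have hz : isAlloc (Function.curry x) := ⟨fun i o => hx (i, o), hsum⟩
  refine ⟨Function.curry x, hz, ?_, consensus_of_forall_ne hsum hcons⟩
  have hshar := sharings_add_eq_card hz
  rw [Function.uncurry_curry] at hshar
  rw [finrank_consensusConstraints_codomain] at hcard
  omega
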